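/- arXiv:2001.06547 — 2 statements merged into one kernel-verified Lean document; each statement's English description precedes it below -/
import Mathlib

section
/- Define R(p) = p²·c / (p²·v + p(1−p)·m) for constants c ∈ ℝ, v > 0, m > 0 with |c| ≤ v (representing the lag-covariance, variance, and mean of a stationary ground truth process). Then for 0 < p ≤ 1, R(p) = p·c / (p·v + (1−p)·m), and the function p ↦ |R(p)| is monotonically nondecreasing on (0,1]. -/
open Set

/-- For `R(p) = p² c / (p² v + p (1-p) m)` with `|c| ≤ v`, `v > 0`, `m > 0`:
on `(0, 1]` we have `R(p) = p c / (p v + (1-p) m)`, and `p ↦ |R(p)|` is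
monotonically nondecreasing on `(0, 1]`. -/
theorem sampled_autocorrelation_simplification_and_monotone
    (c v m : ℝ) (hv : 0 < v) (hm : 0 < m) (hc : |c| ≤ v)
    (R : ℝ → ℝ)
    (hR : ∀ p, R p = p ^ 2 * c / (p ^ 2 * v + p * (1 - p) * m)) :
    (∀ p ∈ Ioc (0 : ℝ) 1, R p = p * c / (p * v + (1 - p) * m)) ∧
      MonotoneOn (fun p => |R p|) (Ioc (0 : ℝ) 1) := by
  have hsimp : ∀ p ∈ Ioc (0 : ℝ) 1, R p = p * c / (p * v + (1 - p) * m) := by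
    intro p hp
    obtain ⟨hp0, hp1⟩ := hp
    rw [hR p]
    rw [show p ^ 2 * v + p * (1 - p) * m = p * (p * v + (1 - p) * m) by ring,
        show p ^ 2 * c = p * (p * c) by ring,
        mul_div_mul_left _ _ (ne_of_gt hp0)]
  refine ⟨hsimp, ?_⟩
  intro a ha b hb hab
  have hda : 0 < a * v + (1 - a) * m := by
    obtain ⟨h0, h1⟩ := ha
    have : 0 ≤ (1 - a) * m := mul_nonneg (by linarith) hm.le
    nlinarith
  have hdb : 0 < b * v + (1 - b) * m := by
    obtain ⟨h0, h1⟩ := hb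
    have : 0 ≤ (1 - b) * m := mul_nonneg (by linarith) hm.le
    nlinarith
  simp only [hsimp a ha, hsimp b hb, abs_div, abs_mul,
    abs_of_pos ha.1, abs_of_pos hb.1, abs_of_pos hda, abs_of_pos hdb]
  rw [div_le_div_iff₀ hda hdb]
  have hc0 : 0 ≤ |c| := abs_nonneg c
  nlinarith [mul_nonneg (mul_nonneg hc0 hm.le) (sub_nonneg.2 hab)]
end

section
/- Let c, v, m with v > 0, m > 0 and 0 < |c| ≤ v, and define ρ_Y(p) = p·c/(p·v + (1−p)·m). Then for sampling rates p₁ ≤ p₂ in (0,1], we have |ρ_Y(p₁)| ≤ |ρ_Y(p₂)|, i.e., coarser sampling never increases the magnitude of autocorrelation of the observed signal. -/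
open Set

/-- Monotone decay of autocorrelation under sampling: for `ρ_Y(p) = p c / (p v + (1-p) m)`
with `0 < |c| ≤ v`, `m > 0`, coarser sampling never increases the magnitude of
autocorrelation: `p₁ ≤ p₂` in `(0,1]` implies `|ρ_Y(p₁)| ≤ |ρ_Y(p₂)|`. -/
theorem autocorrelation_magnitude_monotone_in_sampling_rate
    (c v m : ℝ) (hv : 0 < v) (hm : 0 < m) (hc0 : 0 < |c|) (hc : |c| ≤ v)
    (ρY : ℝ → ℝ) (hρY : ∀ p, ρY p = p * c / (p * v + (1 - p) * m)) :
    ∀ p₁ ∈ Ioc (0 : ℝ) 1, ∀ p₂ ∈ Ioc (0 : ℝ) 1, p₁ ≤ p₂ → |ρY p₁| ≤ |ρY p₂| := by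
  intro p₁ hp₁ p₂ hp₂ h12
  obtain ⟨h1p, h1u⟩ := hp₁
  obtain ⟨h2p, h2u⟩ := hp₂
  have hD1 : 0 < p₁ * v + (1 - p₁) * m := by nlinarith
  have hD2 : 0 < p₂ * v + (1 - p₂) * m := by nlinarith
  rw [hρY, hρY, abs_div, abs_mul, abs_of_pos h1p, abs_of_pos hD1,
    abs_div, abs_mul, abs_of_pos h2p, abs_of_pos hD2]
  rw [div_le_div_iff₀ hD1 hD2]
  nlinarith [mul_nonneg (mul_nonneg (sub_nonneg.2 h12) (abs_nonneg c)) hm.le]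
end
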